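/- arXiv:1808.04168 — 3 statements merged into one kernel-verified Lean document; each statement's English description precedes it below -/
import Mathlib

section
/- Let I = (a,b) be bounded, f : I → ℝ integrable with f ≥ 0, q : I → ℝ measurable with 1 < q⁻ ≤ q(x) ≤ q⁺ < ∞ a.e., where q⁻ = essinf q, and suppose Q₋ = {x ∈ I : q(x) = q⁻} has positive measure. Then lim_{K → 0⁺} K^{-q⁻} ∫_a^b f(x) K^{q(x)} dx = ∫_{Q₋} f(x) dx. -/
open MeasureTheory Set Filter

/-- If `q` attains its essential infimum `q⁻` on a set `Q₋` of positive measure,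
then `K^{-q⁻} ∫_a^b f K^{q(x)} dx → ∫_{Q₋} f dx` as `K → 0⁺`. -/
theorem limit_at_zero_identifies_min_set
    (a b : ℝ) (hab : a < b) (f q : ℝ → ℝ)
    (hf : IntegrableOn f (Ioo a b)) (hfpos : ∀ x, 0 ≤ f x)
    (hq : Measurable q)
    (qm qp : ℝ) (hqm : 1 < qm)
    (hqbd : ∀ᵐ x ∂(volume.restrict (Ioo a b)), qm ≤ q x ∧ q x ≤ qp)
    (hqm' : qm = essInf q (volume.restrict (Ioo a b)))
    (hQ : 0 < volume {x ∈ Ioo a b | q x = qm}) :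
    Tendsto (fun K : ℝ => K ^ (-qm) * ∫ x in Ioo a b, f x * K ^ (q x))
      (nhdsWithin 0 (Ioi 0)) (nhds (∫ x in {x ∈ Ioo a b | q x = qm}, f x)) := by
  set μ := volume.restrict (Ioo a b) with hμ
  have hmset : MeasurableSet {x : ℝ | q x = qm} := hq (measurableSet_singleton qm)
  -- rewrite the target integral
  have hsets : {x ∈ Ioo a b | q x = qm} = {x | q x = qm} ∩ Ioo a b := by
    ext x; simp [Set.mem_inter_iff, and_comm]
  have htarget : (∫ x in {x ∈ Ioo a b | q x = qm}, f x)
      = ∫ x, Set.indicator {x | q x = qm} f x ∂μ := by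
    rw [integral_indicator hmset, hμ, Measure.restrict_restrict hmset, hsets]
  rw [htarget]
  -- the main convergence via dominated convergence
  have key : Tendsto (fun K : ℝ => ∫ x, f x * K ^ (q x - qm) ∂μ)
      (nhdsWithin 0 (Ioi 0)) (nhds (∫ x, Set.indicator {x | q x = qm} f x ∂μ)) := by
    apply tendsto_integral_filter_of_dominated_convergence f
    · filter_upwards [self_mem_nhdsWithin] with K hK
      have hK0 : (0:ℝ) < K := hK
      have hmeas : Measurable fun x => K ^ (q x - qm) := by
        have : (fun x => K ^ (q x - qm))
            = fun x => Real.exp (Real.log K * (q x - qm)) := by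
          ext x; rw [Real.rpow_def_of_pos hK0]
        rw [this]
        exact Real.continuous_exp.measurable.comp
          (measurable_const.mul (hq.sub measurable_const))
      exact hf.aestronglyMeasurable.mul hmeas.aestronglyMeasurable
    · filter_upwards [Ioo_mem_nhdsGT_of_mem (by norm_num : (0:ℝ) ∈ Ico 0 1)] with K hK
      filter_upwards [hqbd] with x hx
      have h1 : (0:ℝ) ≤ K ^ (q x - qm) := Real.rpow_nonneg hK.1.le _
      have h2 : K ^ (q x - qm) ≤ 1 :=
        Real.rpow_le_one hK.1.le hK.2.le (by linarith [hx.1])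
      rw [Real.norm_eq_abs, abs_mul, abs_of_nonneg (hfpos x), abs_of_nonneg h1]
      calc f x * K ^ (q x - qm) ≤ f x * 1 := by
            exact mul_le_mul_of_nonneg_left h2 (hfpos x)
        _ = f x := mul_one _
    · exact hf
    · filter_upwards [hqbd] with x hx
      by_cases hxm : q x = qm
      · have : ∀ K : ℝ, f x * K ^ (q x - qm) = f x := by
          intro K; rw [hxm, sub_self, Real.rpow_zero, mul_one]
        simp only [this, Set.indicator_of_mem (show x ∈ {x | q x = qm} from hxm)]
        exact tendsto_const_nhds
      · have hpos : 0 < q x - qm := by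
          rcases lt_or_eq_of_le hx.1 with h | h
          · linarith
          · exact absurd h.symm hxm
        rw [Set.indicator_of_notMem (show x ∉ {x | q x = qm} from hxm)]
        have : Tendsto (fun K : ℝ => K ^ (q x - qm)) (nhdsWithin 0 (Ioi 0)) (nhds 0) := by
          have hc : ContinuousAt (fun K : ℝ => K ^ (q x - qm)) 0 :=
            Real.continuousAt_rpow_const 0 _ (Or.inr hpos.le)
          have := hc.tendsto
          rw [Real.zero_rpow (ne_of_gt hpos)] at this
          exact this.mono_left nhdsWithin_le_nhds
        simpa using tendsto_const_nhds.mul this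
  -- rewrite the LHS function eventually
  refine Tendsto.congr' ?_ key
  filter_upwards [self_mem_nhdsWithin] with K hK
  have hK0 : (0:ℝ) < K := hK
  rw [← integral_const_mul]
  congr 1
  ext x
  rw [sub_eq_add_neg, Real.rpow_add hK0]
  ring
end

section
/- Let I be a bounded interval with Lebesgue measure, let q : I → ℝ be measurable and bounded, and let S = {x ↦ exp(t·q(x)) : t ∈ ℝ}. Then for 1 < r < ∞, the closure of span(S) in L^r(I) equals the subspace of L^r(I) consisting of (classes of) functions having a σ(q)-measurable representative. -/
/-!
Every element of the span of the exponentials `exp (t * q)` is `σ(q)`-measurable, and an `L^r`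
limit of `σ(q)`-measurable functions has a `σ(q)`-measurable representative, since a subsequence
converges almost everywhere.

Conversely, a `σ(q)`-measurable `f` factors as `φ ∘ q` (Doob–Dynkin). Approximate `φ` in
`L^r(q_* μ)` by a bounded continuous `ψ`. The exponentials `z ↦ exp (t * z)` are closed under
multiplication and separate points, so by Stone–Weierstrass their span approximates `ψ` uniformly
on `[-M, M]`, which contains the range of `q`. On a finite measure space, uniform approximation
implies `L^r` approximation.
-/

open MeasureTheory Set Filter Topology
open scoped ENNReal

theorem ENNReal.exists_seq_tendsto_zero_of_forall_lt {ι : Type*} {s : Set ι} {d : ι → ℝ≥0∞}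
    (h : ∀ ε ≠ 0, ∃ x ∈ s, d x < ε) :
    ∃ x : ℕ → ι, (∀ n, x n ∈ s) ∧ Tendsto (d ∘ x) atTop (𝓝 0) := by
  have hzero : (0 : ℝ≥0∞) ∈ closure (d '' s) := by
    refine (mem_closure_iff_nhds_basis ENNReal.nhds_zero_basis).2 fun ε hε => ?_
    obtain ⟨x, hx, hdx⟩ := h ε hε.ne'
    exact ⟨d x, ⟨x, hx, rfl⟩, hdx⟩
  obtain ⟨y, hy, hlim⟩ := mem_closure_iff_seq_limit.1 hzero
  choose x hx hxy using hy
  exact ⟨x, hx, by simpa only [Function.comp_def, hxy] using hlim⟩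

section Lp

variable {α E : Type*} [NormedAddCommGroup E]

theorem exists_mem_eLpNorm_sub_lt_of_forall_norm_sub_le [MeasurableSpace α] {μ : Measure α}
    [IsFiniteMeasure μ] {p : ℝ≥0∞} {s : Set (α → E)} {f : α → E}
    (hf : ∀ δ > 0, ∃ g ∈ s, ∀ x, ‖f x - g x‖ ≤ δ) {ε : ℝ≥0∞} (hε : ε ≠ 0) :
    ∃ g ∈ s, eLpNorm (f - g) p μ < ε := by
  set C := μ univ ^ p.toReal⁻¹
  have hC : C ≠ ∞ := ENNReal.rpow_ne_top_of_nonneg (by positivity) (measure_ne_top μ univ)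
  have hlim : Tendsto (fun δ : ℝ => C * ENNReal.ofReal δ) (𝓝[>] 0) (𝓝 0) := by
    simpa using (ENNReal.Tendsto.const_mul (ENNReal.continuous_ofReal.tendsto 0)
      (Or.inr hC)).mono_left nhdsWithin_le_nhds
  obtain ⟨δ, hδC, hδ⟩ :=
    ((hlim.eventually (gt_mem_nhds (pos_iff_ne_zero.2 hε))).and self_mem_nhdsWithin).exists
  obtain ⟨g, hg, hfg⟩ := hf δ hδ
  exact ⟨g, hg, (eLpNorm_le_of_ae_bound (ae_of_all _ hfg)).trans_lt hδC⟩

variable [CompleteSpace E] {m m₀ : MeasurableSpace α} {μ : Measure[m₀] α} {g : ℕ → α → E}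
  {f : α → E}

theorem aestronglyMeasurable_of_tendsto_ae_of_le (hm : m ≤ m₀)
    (hg : ∀ n, StronglyMeasurable[m] (g n))
    (hlim : ∀ᵐ x ∂μ, Tendsto (g · x) atTop (𝓝 (f x))) : AEStronglyMeasurable[m] f μ := by
  -- The convergence set is `m`-measurable, so convergence also holds `μ.trim hm`-a.e.
  have hconv : ∀ᵐ x ∂μ.trim hm, ∃ c, Tendsto (g · x) atTop (𝓝 c) := by
    have hmeas : MeasurableSet[m] {x | ∃ c, Tendsto (g · x) atTop (𝓝 c)} :=
      @StronglyMeasurable.measurableSet_exists_tendsto ℕ α E m _ _ atTop _ g _ hg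
    show μ.trim hm {x | ∃ c, Tendsto (g · x) atTop (𝓝 c)}ᶜ = 0
    rw [trim_measurableSet_eq hm hmeas.compl]
    exact ae_iff.1 (hlim.mono fun x hx => ⟨f x, hx⟩)
  obtain ⟨f₀, hf₀, hlim₀⟩ := exists_stronglyMeasurable_limit_of_tendsto_ae (μ := μ.trim hm)
    (fun n => ⟨g n, hg n, .rfl⟩) hconv
  refine ⟨f₀, hf₀, ?_⟩
  filter_upwards [hlim, ae_of_ae_trim hm hlim₀] with x h₁ h₂ using tendsto_nhds_unique h₁ h₂

theorem aestronglyMeasurable_of_tendsto_eLpNorm (hm : m ≤ m₀)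
    (hg : ∀ n, StronglyMeasurable[m] (g n)) {p : ℝ≥0∞} (hp : p ≠ 0)
    (hf : AEStronglyMeasurable f μ) (hlim : Tendsto (fun n => eLpNorm (f - g n) p μ) atTop (𝓝 0)) :
    AEStronglyMeasurable[m] f μ := by
  have hconv : TendstoInMeasure μ g atTop f := by
    refine tendstoInMeasure_of_tendsto_eLpNorm hp
      (fun n => ((hg n).mono hm).aestronglyMeasurable) hf ?_
    simpa only [eLpNorm_sub_comm] using hlim
  obtain ⟨ns, -, hns⟩ := hconv.exists_seq_tendsto_ae
  exact aestronglyMeasurable_of_tendsto_ae_of_le hm (fun n => hg (ns n)) hns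

end Lp

def ContinuousMap.expSubmonoid : Submonoid C(ℝ, ℝ) where
  carrier := range fun t : ℝ => ⟨fun z => Real.exp (t * z), by fun_prop⟩
  one_mem' := ⟨0, by ext; simp⟩
  mul_mem' := by
    rintro _ _ ⟨s, rfl⟩ ⟨t, rfl⟩
    exact ⟨s + t, by ext; simp [add_mul, Real.exp_add]⟩

theorem ContinuousMap.separatesPoints_adjoin_expSubmonoid :
    (Algebra.adjoin ℝ (expSubmonoid : Set C(ℝ, ℝ))).SeparatesPoints := by
  intro z w hzw
  refine ⟨_, ⟨_, Algebra.subset_adjoin ⟨1, rfl⟩, rfl⟩, ?_⟩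
  simpa using hzw

section Exponentials

variable {α : Type*}

def exponentials (q : α → ℝ) : Set (α → ℝ) :=
  {g | ∃ t : ℝ, g = fun x => Real.exp (t * q x)}

variable {q : α → ℝ}

theorem measurable_comap_of_mem_span_exponentials {g : α → ℝ}
    (hg : g ∈ Submodule.span ℝ (exponentials q)) :
    Measurable[MeasurableSpace.comap q Real.measurableSpace] g := by
  induction hg using Submodule.span_induction with
  | mem g hg =>
    obtain ⟨t, rfl⟩ := hg
    exact (by fun_prop : Measurable fun z : ℝ => Real.exp (t * z)).comp (comap_measurable q)
  | zero => exact measurable_const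
  | add _ _ _ _ h₁ h₂ => exact h₁.add h₂
  | smul c _ _ h => exact h.const_smul c

theorem exists_mem_span_exponentials_near {M : ℝ} (hbd : ∀ x, |q x| ≤ M) (ψ : C(ℝ, ℝ))
    {δ : ℝ} (hδ : 0 < δ) :
    ∃ g ∈ Submodule.span ℝ (exponentials q), ∀ x, ‖ψ (q x) - g x‖ < δ := by
  obtain ⟨e, he, hψe⟩ :=
    ContinuousMap.exists_mem_subalgebra_near_continuous_of_isCompact_of_separatesPoints
      ContinuousMap.separatesPoints_adjoin_expSubmonoid ψ (isCompact_Icc (a := -M) (b := M)) hδ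
  have he_span : e ∈ Submodule.span ℝ (ContinuousMap.expSubmonoid : Set C(ℝ, ℝ)) := by
    rwa [← Submonoid.closure_eq ContinuousMap.expSubmonoid, ← Algebra.adjoin_eq_span]
  let L : C(ℝ, ℝ) →ₗ[ℝ] α → ℝ :=
    (LinearMap.funLeft ℝ ℝ q).comp (ContinuousMap.coeFnLinearMap ℝ)
  have hL : (Submodule.span ℝ (ContinuousMap.expSubmonoid : Set C(ℝ, ℝ))).map L ≤
      Submodule.span ℝ (exponentials q) := by
    rw [Submodule.map_span_le]
    rintro _ ⟨t, rfl⟩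
    exact Submodule.subset_span ⟨t, rfl⟩
  refine ⟨L e, hL (Submodule.mem_map_of_mem he_span), fun x => ?_⟩
  rw [norm_sub_rev]
  exact hψe (q x) (abs_le.1 (hbd x))

theorem exists_mem_span_exponentials_eLpNorm_sub_lt [MeasurableSpace α] {μ : Measure α}
    [IsFiniteMeasure μ] {p : ℝ≥0∞} (hp1 : 1 ≤ p) (hp : p ≠ ∞) (hq : Measurable q) {M : ℝ}
    (hbd : ∀ x, |q x| ≤ M) {f : α → ℝ}
    (hf : Measurable[MeasurableSpace.comap q Real.measurableSpace] f) (hfp : MemLp f p μ)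
    {ε : ℝ≥0∞} (hε : ε ≠ 0) :
    ∃ g ∈ Submodule.span ℝ (exponentials q), eLpNorm (f - g) p μ < ε := by
  have hε2 : ε / 2 ≠ 0 := (ENNReal.half_pos hε).ne'
  obtain ⟨φ, hφ, rfl⟩ := hf.exists_eq_measurable_comp
  have hφp : MemLp φ p (μ.map q) :=
    (memLp_map_measure_iff hφ.aestronglyMeasurable hq.aemeasurable).2 hfp
  obtain ⟨ψ, hφψ, hψp⟩ := hφp.exists_boundedContinuous_eLpNorm_sub_le hp hε2
  have hφψq : eLpNorm (φ ∘ q - ψ ∘ q) p μ ≤ ε / 2 := by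
    rwa [eLpNorm_map_measure (hφ.sub ψ.continuous.measurable).aestronglyMeasurable
      hq.aemeasurable] at hφψ
  obtain ⟨g, hg, hψg⟩ := exists_mem_eLpNorm_sub_lt_of_forall_norm_sub_le (μ := μ) (p := p)
    (fun δ hδ => (exists_mem_span_exponentials_near hbd ψ.toContinuousMap hδ).imp
      fun g ⟨hg, h⟩ => ⟨hg, fun x => (h x).le⟩) hε2
  have hgm : Measurable g := (measurable_comap_of_mem_span_exponentials hg).mono hq.comap_le le_rfl
  refine ⟨g, hg, ?_⟩
  calc eLpNorm (φ ∘ q - g) p μ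
      = eLpNorm ((φ ∘ q - ψ ∘ q) + (ψ ∘ q - g)) p μ := by rw [sub_add_sub_cancel]
    _ ≤ eLpNorm (φ ∘ q - ψ ∘ q) p μ + eLpNorm (ψ ∘ q - g) p μ :=
        eLpNorm_add_le ((hφ.comp hq).sub (ψ.continuous.measurable.comp hq)).aestronglyMeasurable
          ((ψ.continuous.measurable.comp hq).sub hgm).aestronglyMeasurable hp1
    _ < ε / 2 + ε / 2 := ENNReal.add_lt_add_of_le_of_lt
        ((hφp.sub hψp).comp_of_map hq.aemeasurable).eLpNorm_ne_top hφψq hψg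
    _ = ε := ENNReal.add_halves ε

end Exponentials

theorem closure_span_exponentials_eq_sigma_measurable_general
    (a b r : ℝ) (hr : 1 < r)
    (q : ℝ → ℝ) (hq : Measurable q) (M : ℝ) (hbd : ∀ x, |q x| ≤ M) :
    let μ := volume.restrict (Ioo a b)
    let S : Set (ℝ → ℝ) := {g | ∃ t : ℝ, g = fun x => Real.exp (t * q x)}
    ∀ f : ℝ → ℝ, MemLp f (ENNReal.ofReal r) μ →
      ((∃ g : ℕ → ℝ → ℝ, (∀ n, g n ∈ Submodule.span ℝ S) ∧
          Tendsto (fun n => eLpNorm (f - g n) (ENNReal.ofReal r) μ) atTop (nhds 0)) ↔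
        ∃ f₀ : ℝ → ℝ,
          @Measurable ℝ ℝ (MeasurableSpace.comap q Real.measurableSpace) _ f₀ ∧
          f =ᵐ[μ] f₀) := by
  intro μ S f hf
  have hp1 : 1 ≤ ENNReal.ofReal r := ENNReal.one_le_ofReal.2 hr.le
  have : IsFiniteMeasure μ := isFiniteMeasure_restrict.2 measure_Ioo_lt_top.ne
  constructor
  · rintro ⟨g, hg, hlim⟩
    obtain ⟨f₀, hf₀, hff₀⟩ := aestronglyMeasurable_of_tendsto_eLpNorm hq.comap_le
      (fun n => (measurable_comap_of_mem_span_exponentials (hg n)).stronglyMeasurable)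
      (zero_lt_one.trans_le hp1).ne' hf.1 hlim
    exact ⟨f₀, hf₀.measurable, hff₀⟩
  · rintro ⟨f₀, hf₀, hff₀⟩
    obtain ⟨g, hg, hlim⟩ := ENNReal.exists_seq_tendsto_zero_of_forall_lt fun ε hε =>
      exists_mem_span_exponentials_eLpNorm_sub_lt hp1 ENNReal.ofReal_ne_top hq hbd hf₀
        (hf.ae_eq hff₀) hε
    exact ⟨g, hg, (tendsto_congr fun n => eLpNorm_congr_ae (hff₀.sub .rfl)).2 hlim⟩

/-- The closure in `L^r(I)` of the span of the exponentials `exp(t·q(x))`,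
`t ∈ ℝ`, consists exactly of those `L^r` functions having a
`σ(q)`-measurable representative. -/
theorem closure_span_exponentials_eq_sigma_measurable
    (a b r : ℝ) (hab : a < b) (hr : 1 < r)
    (q : ℝ → ℝ) (hq : Measurable q) (M : ℝ) (hbd : ∀ x, |q x| ≤ M) :
    let μ := volume.restrict (Ioo a b)
    let S : Set (ℝ → ℝ) := {g | ∃ t : ℝ, g = fun x => Real.exp (t * q x)}
    ∀ f : ℝ → ℝ, MemLp f (ENNReal.ofReal r) μ →
      ((∃ g : ℕ → ℝ → ℝ, (∀ n, g n ∈ Submodule.span ℝ S) ∧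
          Tendsto (fun n => eLpNorm (f - g n) (ENNReal.ofReal r) μ) atTop (nhds 0)) ↔
        ∃ f₀ : ℝ → ℝ,
          @Measurable ℝ ℝ (MeasurableSpace.comap q Real.measurableSpace) _ f₀ ∧
          f =ᵐ[μ] f₀) :=
  closure_span_exponentials_eq_sigma_measurable_general a b r hr q hq M hbd
end

section
/- Let I = (a,b) be bounded, γ measurable with 0 < c ≤ γ ≤ C a.e., p measurable with 1 < p⁻ ≤ p ≤ p⁺ < ∞ a.e. Set f = γ^{-1/(p-1)}, k = ∫_a^b f dx, and define K(m) implicitly by ∫_a^b f(x) K(m)^{1/(p(x)-1)} dx = m and Λ(m) = ∫_a^b f(x) K(m)^{p(x)/(p(x)-1)} dx. Then Λ is differentiable at m = k with Λ'(k) = (∫_I f(x) p(x)/(p(x)-1) dx) / (∫_I f(x)/(p(x)-1) dx), and consequently Λ'(k) > 1 and ∫_I f(x)/(p(x)-1) dx = (∫_I f dx)·(Λ'(k) - 1)^{-1}. -/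
open MeasureTheory Set Filter Topology

/-!
With `e = 1/(p-1)` and `Φ(t) = ∫ f t^e`, the hypothesis on `K` says `Φ ∘ K = id` on `(0, ∞)`.
Since `Φ` is strictly increasing with `Φ(1) = k` and `Φ'(1) = ∫ f e > 0`, the inverse function
theorem gives `K(k) = 1` and `K'(k) = (∫ f e)⁻¹`. As `p/(p-1) = 1 + e`, we have
`Λ(m) = K(m) Φ(K(m)) = m K(m)`, so `Λ'(k) = 1 + k / ∫ f e = ∫ f (1 + e) / ∫ f e`.
-/

theorem Real.rpow_le_max_inv_rpow_of_abs_le {t s E : ℝ} (ht : 0 < t) (hs : |s| ≤ E) :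
    t ^ s ≤ max t t⁻¹ ^ E := by
  have hmax : 1 ≤ max t t⁻¹ := by
    rcases le_total t 1 with h | h
    · exact le_max_of_le_right ((one_le_inv₀ ht).2 h)
    · exact le_max_of_le_left h
  calc t ^ s ≤ max t t⁻¹ ^ |s| := by
        rcases le_total 0 s with h | h
        · rw [abs_of_nonneg h]
          exact Real.rpow_le_rpow ht.le (le_max_left _ _) h
        · calc t ^ s = t⁻¹ ^ (-s) := by
                rw [Real.inv_rpow ht.le, Real.rpow_neg ht.le, inv_inv]
            _ ≤ max t t⁻¹ ^ |s| := by
                rw [abs_of_nonpos h]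
                exact Real.rpow_le_rpow (inv_nonneg.2 ht.le) (le_max_right _ _) (neg_nonneg.2 h)
    _ ≤ max t t⁻¹ ^ E := Real.rpow_le_rpow_of_exponent_le hmax hs

theorem StrictMonoOn.hasDerivAt_of_rightInvOn {Φ K : ℝ → ℝ} {s : Set ℝ} {m A : ℝ}
    (hΦ : StrictMonoOn Φ s) (hΦs : MapsTo Φ s s) (hKs : MapsTo K s s) (hK : RightInvOn K Φ s)
    (hs : IsOpen s) (hm : m ∈ s) (hΦ' : HasDerivAt Φ A (K m)) (hA : A ≠ 0) :
    HasDerivAt K A⁻¹ m := by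
  have hK_mono : MonotoneOn K s := fun x hx y hy hxy => not_lt.1 fun hlt =>
    hxy.not_gt (by simpa only [hK hx, hK hy] using hΦ (hKs hy) (hKs hx) hlt)
  have hK_image : s ⊆ K '' s := calc
    s = K '' (Φ '' s) := ((hΦ.injOn.rightInvOn_of_leftInvOn hK hΦs hKs).image_image).symm
    _ ⊆ K '' s := image_mono hΦs.image_subset
  have hK_cont : ContinuousAt K m := continuousAt_of_monotoneOn_of_image_mem_nhds hK_mono
    (hs.mem_nhds hm) (mem_of_superset (hs.mem_nhds (hKs hm)) hK_image)
  exact hΦ'.of_local_left_inverse hK_cont hA (eventually_of_mem (hs.mem_nhds hm) hK)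

section WeightedRpowIntegral

variable {α : Type*} [MeasurableSpace α] {μ : Measure α} {f e : α → ℝ} {E : ℝ}

theorem integral_pos_of_ae_pos [NeZero μ] {g : α → ℝ} (hg : Integrable g μ)
    (h : ∀ᵐ x ∂μ, 0 < g x) : 0 < ∫ x, g x ∂μ := by
  rw [integral_pos_iff_support_of_nonneg_ae (h.mono fun _ hx => hx.le) hg, pos_iff_ne_zero]
  intro h0
  have hfalse : ∀ᵐ _ ∂μ, False :=
    ((measure_eq_zero_iff_ae_notMem.1 h0).and h).mono fun _ hx => hx.1 hx.2.ne'
  exact NeZero.ne μ (ae_eq_bot.1 (eventually_false_iff_eq_bot.1 hfalse))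

theorem integrable_rpow_neg_of_le [IsFiniteMeasure μ] {γ : α → ℝ} {c : ℝ} (hγ : Measurable γ)
    (he : Measurable e) (hc : 0 < c) (hγc : ∀ᵐ x ∂μ, c ≤ γ x) (he_nonneg : ∀ᵐ x ∂μ, 0 ≤ e x)
    (he_bd : ∀ᵐ x ∂μ, |e x| ≤ E) : Integrable (fun x => γ x ^ (-e x)) μ := by
  refine Integrable.of_bound (hγ.pow he.neg).aestronglyMeasurable (max c c⁻¹ ^ E) ?_
  filter_upwards [hγc, he_nonneg, he_bd] with x hγx hex hex'
  rw [Real.norm_of_nonneg (Real.rpow_nonneg (hc.le.trans hγx) _)]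
  calc γ x ^ (-e x) ≤ c ^ (-e x) := Real.rpow_le_rpow_of_nonpos hc hγx (neg_nonpos.2 hex)
    _ ≤ max c c⁻¹ ^ E := Real.rpow_le_max_inv_rpow_of_abs_le hc (by rwa [abs_neg])

noncomputable def weightedRpowIntegral (μ : Measure α) (f e : α → ℝ) (t : ℝ) : ℝ :=
  ∫ x, f x * t ^ e x ∂μ

theorem weightedRpowIntegral_one : weightedRpowIntegral μ f e 1 = ∫ x, f x ∂μ := by
  simp only [weightedRpowIntegral, Real.one_rpow, mul_one]

theorem integral_mul_rpow_one_add {t : ℝ} (ht : 0 < t) :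
    ∫ x, f x * t ^ (1 + e x) ∂μ = t * weightedRpowIntegral μ f e t := by
  rw [weightedRpowIntegral, ← integral_const_mul]
  congr 1 with x
  rw [Real.rpow_add ht, Real.rpow_one]
  ring

theorem integrable_mul_rpow (hf : Integrable f μ) (he : Measurable e) (he_bd : ∀ᵐ x ∂μ, |e x| ≤ E)
    {t : ℝ} (ht : 0 < t) : Integrable (fun x => f x * t ^ e x) μ :=
  hf.mul_bdd (measurable_const.pow he).aestronglyMeasurable <| he_bd.mono fun x hx => by
    rw [Real.norm_of_nonneg (Real.rpow_nonneg ht.le _)]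
    exact Real.rpow_le_max_inv_rpow_of_abs_le ht hx

theorem weightedRpowIntegral_pos [NeZero μ] (hf : Integrable f μ) (he : Measurable e)
    (he_bd : ∀ᵐ x ∂μ, |e x| ≤ E) (hf_pos : ∀ᵐ x ∂μ, 0 < f x) {t : ℝ} (ht : 0 < t) :
    0 < weightedRpowIntegral μ f e t :=
  integral_pos_of_ae_pos (integrable_mul_rpow hf he he_bd ht)
    (hf_pos.mono fun _ hx => mul_pos hx (Real.rpow_pos_of_pos ht _))

theorem strictMonoOn_weightedRpowIntegral [NeZero μ] (hf : Integrable f μ) (he : Measurable e)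
    (he_bd : ∀ᵐ x ∂μ, |e x| ≤ E) (hf_pos : ∀ᵐ x ∂μ, 0 < f x) (he_pos : ∀ᵐ x ∂μ, 0 < e x) :
    StrictMonoOn (weightedRpowIntegral μ f e) (Ioi 0) := by
  intro t ht u hu htu
  have hint := fun {s : ℝ} (hs : 0 < s) => integrable_mul_rpow hf he he_bd hs
  rw [← sub_pos, weightedRpowIntegral, weightedRpowIntegral, ← integral_sub (hint hu) (hint ht)]
  refine integral_pos_of_ae_pos ((hint hu).sub (hint ht)) ?_
  filter_upwards [hf_pos, he_pos] with x hfx hex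
  exact sub_pos.2 (mul_lt_mul_of_pos_left (Real.rpow_lt_rpow (le_of_lt ht) htu hex) hfx)

theorem hasDerivAt_weightedRpowIntegral_one (hf : Integrable f μ) (he : Measurable e)
    (he_bd : ∀ᵐ x ∂μ, |e x| ≤ E) :
    HasDerivAt (weightedRpowIntegral μ f e) (∫ x, f x * e x ∂μ) 1 := by
  have h_bound : ∀ᵐ x ∂μ, ∀ t ∈ Ioo (1 / 2 : ℝ) 2,
      ‖f x * (e x * t ^ (e x - 1))‖ ≤ ‖f x‖ * (E * 2 ^ (E + 1)) := by
    filter_upwards [he_bd] with x hx t ⟨ht₁, ht₂⟩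
    have ht : 0 < t := by linarith
    have hmax : max t t⁻¹ ≤ 2 := max_le ht₂.le (by rw [inv_le_comm₀ ht two_pos]; linarith)
    have hE : 0 ≤ E := (abs_nonneg _).trans hx
    have hpow : t ^ (e x - 1) ≤ 2 ^ (E + 1) := calc
      t ^ (e x - 1) ≤ max t t⁻¹ ^ (E + 1) := Real.rpow_le_max_inv_rpow_of_abs_le ht <|
        (abs_sub _ _).trans (by rw [abs_one]; linarith)
      _ ≤ 2 ^ (E + 1) := Real.rpow_le_rpow (by positivity) hmax (by linarith)
    rw [norm_mul, norm_mul, Real.norm_of_nonneg (Real.rpow_nonneg ht.le _)]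
    gcongr
    exact hx
  have key := hasDerivAt_integral_of_dominated_loc_of_deriv_le (μ := μ) (x₀ := 1)
    (F := fun t x => f x * t ^ e x) (F' := fun t x => f x * (e x * t ^ (e x - 1)))
    (Ioo_mem_nhds (by norm_num) (by norm_num))
    (Eventually.of_forall fun _ => hf.1.mul (measurable_const.pow he).aestronglyMeasurable)
    (integrable_mul_rpow hf he he_bd one_pos)
    (hf.1.mul (he.mul (measurable_const.pow (he.sub_const 1))).aestronglyMeasurable)
    h_bound (hf.norm.mul_const _)
    (ae_of_all _ fun x t ⟨ht, _⟩ => ((Real.hasDerivAt_rpow_const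
      (Or.inl (by linarith : (0 : ℝ) < t).ne')).const_mul (f x)))
  simp only [Real.one_rpow, mul_one] at key
  exact key.2

theorem apply_integral_eq_one_of_rightInvOn [NeZero μ] (hf : Integrable f μ) (he : Measurable e)
    (he_bd : ∀ᵐ x ∂μ, |e x| ≤ E) (hf_pos : ∀ᵐ x ∂μ, 0 < f x) (he_pos : ∀ᵐ x ∂μ, 0 < e x)
    {K : ℝ → ℝ} (hKs : MapsTo K (Ioi 0) (Ioi 0))
    (hK : RightInvOn K (weightedRpowIntegral μ f e) (Ioi 0)) :
    K (∫ x, f x ∂μ) = 1 :=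
  weightedRpowIntegral_one (e := e) ▸
    (strictMonoOn_weightedRpowIntegral hf he he_bd hf_pos he_pos).injOn.rightInvOn_of_leftInvOn
      hK (fun _ ht => weightedRpowIntegral_pos hf he he_bd hf_pos ht) hKs (mem_Ioi.2 one_pos)

theorem hasDerivAt_of_rightInvOn_weightedRpowIntegral [NeZero μ] (hf : Integrable f μ)
    (he : Measurable e) (he_bd : ∀ᵐ x ∂μ, |e x| ≤ E) (hf_pos : ∀ᵐ x ∂μ, 0 < f x)
    (he_pos : ∀ᵐ x ∂μ, 0 < e x) {K : ℝ → ℝ} (hKs : MapsTo K (Ioi 0) (Ioi 0))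
    (hK : RightInvOn K (weightedRpowIntegral μ f e) (Ioi 0)) :
    HasDerivAt K (∫ x, f x * e x ∂μ)⁻¹ (∫ x, f x ∂μ) := by
  have hfe_pos : 0 < ∫ x, f x * e x ∂μ :=
    integral_pos_of_ae_pos (hf.mul_bdd he.aestronglyMeasurable he_bd)
      (hf_pos.and he_pos |>.mono fun _ hx => mul_pos hx.1 hx.2)
  refine (strictMonoOn_weightedRpowIntegral hf he he_bd hf_pos he_pos).hasDerivAt_of_rightInvOn
    (fun _ ht => weightedRpowIntegral_pos hf he he_bd hf_pos ht) hKs hK isOpen_Ioi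
    (integral_pos_of_ae_pos hf hf_pos) ?_ hfe_pos.ne'
  rw [apply_integral_eq_one_of_rightInvOn hf he he_bd hf_pos he_pos hKs hK]
  exact hasDerivAt_weightedRpowIntegral_one hf he he_bd

end WeightedRpowIntegral

/-- The DN map `Λ` is differentiable at the fixed point `k = ∫ f` with
`Λ'(k) = (∫ f·p/(p-1)) / (∫ f/(p-1))`; consequently `Λ'(k) > 1` and
`∫ f/(p-1) = (∫ f)·(Λ'(k) - 1)⁻¹`. -/
theorem DN_derivative_at_fixed_point
    (a b : ℝ) (hab : a < b) (γ p : ℝ → ℝ) (hγ : Measurable γ) (hp : Measurable p)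
    (c C : ℝ) (hc : 0 < c)
    (hγbd : ∀ᵐ x ∂(volume.restrict (Ioo a b)), c ≤ γ x ∧ γ x ≤ C)
    (pm pp : ℝ) (hpm : 1 < pm)
    (hpbd : ∀ᵐ x ∂(volume.restrict (Ioo a b)), pm ≤ p x ∧ p x ≤ pp)
    (K : ℝ → ℝ)
    (hK : ∀ m : ℝ, 0 < m → 0 < K m ∧
      ∫ x in Ioo a b, (γ x ^ (-(1 / (p x - 1)))) * K m ^ (1 / (p x - 1)) = m) :
    let f : ℝ → ℝ := fun x => γ x ^ (-(1 / (p x - 1)))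
    let Λ : ℝ → ℝ := fun m => ∫ x in Ioo a b, f x * K m ^ (p x / (p x - 1))
    let k : ℝ := ∫ x in Ioo a b, f x
    let D : ℝ := (∫ x in Ioo a b, f x * (p x / (p x - 1))) /
      (∫ x in Ioo a b, f x * (1 / (p x - 1)))
    HasDerivAt Λ D k ∧ 1 < D ∧
      (∫ x in Ioo a b, f x * (1 / (p x - 1)))
        = (∫ x in Ioo a b, f x) * (D - 1)⁻¹ := by
  intro f Λ k D
  set μ : Measure ℝ := volume.restrict (Ioo a b)
  set e : ℝ → ℝ := fun x => 1 / (p x - 1)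
  set A := ∫ x, f x * e x ∂μ
  have : NeZero μ := ⟨by simpa [μ, Measure.restrict_eq_zero, Real.volume_Ioo] using hab⟩
  have he : Measurable e := measurable_const.div (hp.sub_const 1)
  have he_pos : ∀ᵐ x ∂μ, 0 < e x := hpbd.mono fun x hx => one_div_pos.2 (by linarith [hx.1])
  have he_bd : ∀ᵐ x ∂μ, |e x| ≤ 1 / (pm - 1) := he_pos.and hpbd |>.mono fun x hx => by
    rw [abs_of_pos hx.1]
    exact one_div_le_one_div_of_le (by linarith) (by linarith [hx.2.1])
  have hf_pos : ∀ᵐ x ∂μ, 0 < f x :=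
    hγbd.mono fun x hx => Real.rpow_pos_of_pos (hc.trans_le hx.1) _
  have hf : Integrable f μ := integrable_rpow_neg_of_le hγ he hc (hγbd.mono fun _ hx => hx.1)
    (he_pos.mono fun _ hx => hx.le) he_bd
  have hfe : Integrable (fun x => f x * e x) μ := hf.mul_bdd he.aestronglyMeasurable he_bd
  have hK_pos : MapsTo K (Ioi 0) (Ioi 0) := fun m hm => (hK m hm).1
  have hΦK : RightInvOn K (weightedRpowIntegral μ f e) (Ioi 0) := fun m hm => (hK m hm).2
  have hKk : K k = 1 := apply_integral_eq_one_of_rightInvOn hf he he_bd hf_pos he_pos hK_pos hΦK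
  have hK' : HasDerivAt K A⁻¹ k :=
    hasDerivAt_of_rightInvOn_weightedRpowIntegral hf he he_bd hf_pos he_pos hK_pos hΦK
  have hk : 0 < k := integral_pos_of_ae_pos hf hf_pos
  have hA : 0 < A :=
    integral_pos_of_ae_pos hfe (hf_pos.and he_pos |>.mono fun _ hx => mul_pos hx.1 hx.2)
  have hp_div : ∀ᵐ x ∂μ, p x / (p x - 1) = 1 + e x := he_pos.mono fun x hx => by
    have hp1 : p x - 1 ≠ 0 := fun h => by simp [e, h] at hx
    show p x / (p x - 1) = 1 + 1 / (p x - 1)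
    field_simp
    ring
  have hΛ : Λ =ᶠ[𝓝 k] fun m => m * K m := (eventually_gt_nhds hk).mono fun m hm => calc
    Λ m = ∫ x, f x * K m ^ (1 + e x) ∂μ :=
      integral_congr_ae (hp_div.mono fun x hx => by simp only [hx])
    _ = K m * weightedRpowIntegral μ f e (K m) := integral_mul_rpow_one_add (hK m hm).1
    _ = m * K m := by rw [hΦK hm, mul_comm]
  have hD : D = 1 + k / A := by
    have h_ae : (fun x => f x * (p x / (p x - 1))) =ᵐ[μ] fun x => f x + f x * e x :=
      hp_div.mono fun x hx => by simp only [hx, mul_add, mul_one]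
    rw [show D = (∫ x, f x * (p x / (p x - 1)) ∂μ) / A from rfl, integral_congr_ae h_ae,
      integral_add hf hfe, add_div, div_self hA.ne', add_comm]
  refine ⟨?_, ?_, ?_⟩
  · refine (((hasDerivAt_id k).mul hK').congr_of_eventuallyEq hΛ).congr_deriv ?_
    rw [hKk, hD, id]
    ring
  · rw [hD]
    linarith [div_pos hk hA]
  · show A = k * (D - 1)⁻¹
    rw [hD, add_sub_cancel_left, inv_div]
    field_simp
end
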